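/- Let (ηₙ) be a sequence of strictly positive reals with ηₙ → 0, and let (zₙ) be a sequence of nonzero complex numbers such that for every n, X_{ηₙ}(zₙ)² + zₙ·e^{−(zₙ²−1)/(4ηₙ)}·X_{ηₙ}(zₙ) − zₙ² = 0. If (zₙ) converges to z̄ ∈ ℂ, then Re(z̄²) ≤ 1. -/

import Mathlib

/-!
If `Re z̄² > 1` then `|Re z̄| > 1`, and since `X_η` is odd the equation is invariant under
`z ↦ -z`, so we may assume `Re z̄ > 1`. As `η → 0⁺`, the first term of `X_η(z)` then has modulus
of order `e^{(Re z̄ - 1)/(2η)} → ∞` while the second one tends to `0`, and the coefficient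
`b = z e^{-(z² - 1)/(4η)}` tends to `0` because `Re z̄² > 1`. But the equation says
`X (X + b) = z²`, whose right-hand side stays bounded.
-/

open Filter

/-- `X_η(z) = ((1+z)/2)·e^{−(1−z)/(2η)} − ((1−z)/2)·e^{−(1+z)/(2η)}`. -/
noncomputable def X (η : ℝ) (z : ℂ) : ℂ :=
  ((1 + z) / 2) * Complex.exp (-(1 - z) / (2 * (η : ℂ))) -
    ((1 - z) / 2) * Complex.exp (-(1 + z) / (2 * (η : ℂ)))

open Topology

noncomputable def transformedChar (η : ℝ) (z : ℂ) : ℂ :=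
  X η z ^ 2 + z * Complex.exp (-(z ^ 2 - 1) / (4 * (η : ℂ))) * X η z - z ^ 2

lemma X_neg (η : ℝ) (z : ℂ) : X η (-z) = -X η z := by
  unfold X
  ring_nf

lemma transformedChar_neg (η : ℝ) (z : ℂ) : transformedChar η (-z) = transformedChar η z := by
  unfold transformedChar
  rw [X_neg]
  ring_nf

lemma Complex.norm_exp_div_ofNat_mul_ofReal (w : ℂ) (n : ℕ) [n.AtLeastTwo] (η : ℝ) :
    ‖Complex.exp (w / (no_index (OfNat.ofNat n) * η))‖ = Real.exp (w.re / OfNat.ofNat n / η) := by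
  rw [div_mul_eq_div_div, Complex.norm_exp, Complex.div_ofReal_re, Complex.div_ofNat_re]

section Limits

variable {ι : Type*} {l : Filter ι} {η a : ι → ℝ} {a₀ : ℝ}

lemma tendsto_exp_div_atTop (hη : Tendsto η l (𝓝[>] 0)) (ha : Tendsto a l (𝓝 a₀))
    (h : 0 < a₀) : Tendsto (fun i ↦ Real.exp (a i / η i)) l atTop := by
  simp only [div_eq_mul_inv]
  exact Real.tendsto_exp_atTop.comp (ha.pos_mul_atTop h (tendsto_inv_nhdsGT_zero.comp hη))

lemma tendsto_exp_div_zero (hη : Tendsto η l (𝓝[>] 0)) (ha : Tendsto a l (𝓝 a₀))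
    (h : a₀ < 0) : Tendsto (fun i ↦ Real.exp (a i / η i)) l (𝓝 0) := by
  simp only [div_eq_mul_inv]
  exact Real.tendsto_exp_atBot.comp (ha.neg_mul_atTop h (tendsto_inv_nhdsGT_zero.comp hη))

variable {z : ι → ℂ} {z₀ : ℂ}

lemma tendsto_norm_X_atTop (hη : Tendsto η l (𝓝[>] 0)) (hz : Tendsto z l (𝓝 z₀))
    (h : 1 < z₀.re) : Tendsto (fun i ↦ ‖X (η i) (z i)‖) l atTop := by
  have hre : Tendsto (fun i ↦ (z i).re) l (𝓝 z₀.re) :=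
    Complex.continuous_re.continuousAt.tendsto.comp hz
  have hA : Tendsto (fun i ↦ ‖(1 + z i) / 2 * Complex.exp (-(1 - z i) / (2 * η i))‖)
      l atTop := by
    simp only [norm_mul, Complex.norm_exp_div_ofNat_mul_ofReal, Complex.neg_re, Complex.sub_re,
      Complex.one_re]
    refine Tendsto.pos_mul_atTop ?_ ((hz.const_add 1).div_const 2).norm
      (tendsto_exp_div_atTop hη ((hre.const_sub 1).neg.div_const 2) (by linarith))
    have hre_pos : 0 < ((1 + z₀) / 2).re := by
      rw [Complex.div_ofNat_re, Complex.add_re, Complex.one_re]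
      linarith
    exact hre_pos.trans_le (Complex.re_le_norm _)
  have hB : Tendsto (fun i ↦ ‖(1 - z i) / 2 * Complex.exp (-(1 + z i) / (2 * η i))‖)
      l (𝓝 0) := by
    simp only [norm_mul, Complex.norm_exp_div_ofNat_mul_ofReal, Complex.neg_re, Complex.add_re,
      Complex.one_re]
    simpa using ((hz.const_sub 1).div_const 2).norm.mul
      (tendsto_exp_div_zero hη ((hre.const_add 1).neg.div_const 2) (by linarith))
  refine tendsto_atTop_mono (fun i ↦ ?_) (hA.atTop_add hB.neg)
  exact norm_sub_norm_le _ _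

lemma tendsto_norm_mul_exp_zero (hη : Tendsto η l (𝓝[>] 0)) (hz : Tendsto z l (𝓝 z₀))
    (h : 1 < (z₀ ^ 2).re) :
    Tendsto (fun i ↦ ‖z i * Complex.exp (-(z i ^ 2 - 1) / (4 * η i))‖) l (𝓝 0) := by
  have hre : Tendsto (fun i ↦ (z i ^ 2).re) l (𝓝 (z₀ ^ 2).re) :=
    Complex.continuous_re.continuousAt.tendsto.comp (hz.pow 2)
  simp only [norm_mul, Complex.norm_exp_div_ofNat_mul_ofReal, Complex.neg_re, Complex.sub_re,
    Complex.one_re]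
  simpa using hz.norm.mul
    (tendsto_exp_div_zero hη ((hre.sub_const 1).neg.div_const 4) (by linarith))

lemma eventually_transformedChar_ne_zero_of_one_lt_re (hη : Tendsto η l (𝓝[>] 0))
    (hz : Tendsto z l (𝓝 z₀)) (h : 1 < z₀.re) (h2 : 1 < (z₀ ^ 2).re) :
    ∀ᶠ i in l, transformedChar (η i) (z i) ≠ 0 := by
  set x : ι → ℂ := fun i ↦ X (η i) (z i)
  set b : ι → ℂ := fun i ↦ z i * Complex.exp (-(z i ^ 2 - 1) / (4 * η i))
  have hx := tendsto_norm_X_atTop hη hz h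
  have hb := tendsto_norm_mul_exp_zero hη hz h2
  have hgrow : Tendsto (fun i ↦ ‖x i‖ * (‖x i‖ + -‖b i‖) + -‖z i ^ 2‖) l atTop :=
    (hx.atTop_mul_atTop₀ (hx.atTop_add hb.neg)).atTop_add (hz.pow 2).norm.neg
  filter_upwards [hgrow.eventually_gt_atTop 0] with i hi hchar
  have hfac : x i * (x i + b i) = z i ^ 2 := by
    unfold transformedChar at hchar
    linear_combination hchar
  have : ‖x i‖ * (‖x i‖ - ‖b i‖) ≤ ‖z i ^ 2‖ := by
    rw [← hfac, norm_mul (x i)]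
    have hsub : ‖x i‖ - ‖b i‖ ≤ ‖x i + b i‖ := by linarith [norm_le_add_norm_add (x i) (b i)]
    exact mul_le_mul_of_nonneg_left hsub (norm_nonneg (x i))
  linarith

lemma eventually_transformedChar_ne_zero (hη : Tendsto η l (𝓝[>] 0))
    (hz : Tendsto z l (𝓝 z₀)) (h : 1 < (z₀ ^ 2).re) :
    ∀ᶠ i in l, transformedChar (η i) (z i) ≠ 0 := by
  have hsq : 1 < z₀.re ^ 2 := by
    rw [sq z₀, Complex.mul_re] at h
    nlinarith [sq_nonneg z₀.im]
  rcases lt_abs.1 ((one_lt_sq_iff_one_lt_abs _).1 hsq) with hpos | hneg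
  · exact eventually_transformedChar_ne_zero_of_one_lt_re hη hz hpos h
  · simpa only [transformedChar_neg] using
      eventually_transformedChar_ne_zero_of_one_lt_re hη hz.neg (by simpa using hneg)
        (by simpa using h)

end Limits

theorem stmt_2_general (η : ℕ → ℝ) (hηpos : ∀ n, 0 < η n)
    (hη0 : Tendsto η atTop (nhds 0))
    (z : ℕ → ℂ)
    (heq : ∀ n, X (η n) (z n) ^ 2 +
      z n * Complex.exp (-((z n) ^ 2 - 1) / (4 * (η n : ℂ))) * X (η n) (z n) -
      (z n) ^ 2 = 0)
    (zbar : ℂ) (hlim : Tendsto z atTop (nhds zbar)) :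
    (zbar ^ 2).re ≤ 1 := by
  by_contra! h
  have hη : Tendsto η atTop (𝓝[>] 0) := tendsto_nhdsWithin_iff.2 ⟨hη0, .of_forall hηpos⟩
  obtain ⟨n, hn⟩ := (eventually_transformedChar_ne_zero hη hlim h).exists
  exact hn (heq n)

theorem stmt_2 (η : ℕ → ℝ) (hηpos : ∀ n, 0 < η n)
    (hη0 : Tendsto η atTop (nhds 0))
    (z : ℕ → ℂ) (hz : ∀ n, z n ≠ 0)
    (heq : ∀ n, X (η n) (z n) ^ 2 +
      z n * Complex.exp (-((z n) ^ 2 - 1) / (4 * (η n : ℂ))) * X (η n) (z n) -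
      (z n) ^ 2 = 0)
    (zbar : ℂ) (hlim : Tendsto z atTop (nhds zbar)) :
    (zbar ^ 2).re ≤ 1 :=
  stmt_2_general η hηpos hη0 z heq zbar hlim
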